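/- arXiv:2208.14703 — 2 statements merged into one kernel-verified Lean document; each statement's English description precedes it below -/
import Mathlib

section
/- The Eddington factor χ(f) = (3 + 4f²)/(5 + 2√(4 − 3f²)) is monotonically increasing on [0,1]. -/
/-! Rationalising the denominator gives `χ(f) = (5 - 2√(4 - 3f²)) / 3`, since
`(5 + 2√(4 - 3f²))(5 - 2√(4 - 3f²)) = 9 + 12f² = 3(3 + 4f²)`; and `√(4 - 3f²)` decreases in `f ≥ 0`. -/

theorem eddington_factor_eq {f : ℝ} (hf : 3 * f ^ 2 ≤ 4) :
    (3 + 4 * f ^ 2) / (5 + 2 * Real.sqrt (4 - 3 * f ^ 2)) =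
      (5 - 2 * Real.sqrt (4 - 3 * f ^ 2)) / 3 := by
  have hsq : Real.sqrt (4 - 3 * f ^ 2) ^ 2 = 4 - 3 * f ^ 2 := Real.sq_sqrt (by linarith)
  rw [div_eq_div_iff (by positivity) (by norm_num)]
  linear_combination 4 * hsq

theorem three_mul_sq_le_four_of_mem_Icc {f : ℝ} (hf : f ∈ Set.Icc (0 : ℝ) 1) : 3 * f ^ 2 ≤ 4 := by
  nlinarith [hf.1, hf.2]

/-- The Eddington factor `χ(f) = (3 + 4f²)/(5 + 2√(4 − 3f²))` is monotonically
increasing on `[0,1]`. -/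
theorem eddington_factor_monotone
    (χ : ℝ → ℝ)
    (hχ : ∀ f : ℝ, χ f = (3 + 4 * f ^ 2) / (5 + 2 * Real.sqrt (4 - 3 * f ^ 2))) :
    MonotoneOn χ (Set.Icc (0 : ℝ) 1) := by
  intro a ha b hb hab
  rw [hχ, hχ, eddington_factor_eq (three_mul_sq_le_four_of_mem_Icc ha),
    eddington_factor_eq (three_mul_sq_le_four_of_mem_Icc hb)]
  gcongr
  exact ha.1
end

section
/- If the implicit pseudo-time equation u^{m+1} + Δτ·A(u^{m+1}) = ũ holds where A is the Jacobi-form operator A(v)_i = D(v_i) − L(v_{i−1}) − R(v_{i+1}) with D = (1+cΔt/h)Id and L, R preserving the closed admissible cone, and the fixed-point iteration u ↦ (Id + Δτ D)⁻¹(ũ + Δτ(L + R)-terms) starts from admissible data ũ, then every iterate is admissible. -/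
/-- The fixed-point iteration for the implicit pseudo-time equation
`(1 + Δτ(1 + cΔt/h)) u_i^{(k+1)} = ũ_i + Δτ (L(u_{i−1}^{(k)}) + R(u_{i+1}^{(k)}))`,
with `L`, `R` preserving the closed admissible cone and admissible data `ũ` and
admissible initial iterate, produces admissible iterates. -/
theorem pseudo_time_fixed_point_iterates_admissible
    (c Δt h Δτ : ℝ) (hc : 0 < c) (hΔt : 0 < Δt) (hh : 0 < h) (hΔτ : 0 < Δτ)
    (N : ℕ) [NeZero N]
    (S Sbar : Set (ℝ × ℝ))
    (hS : S = {p : ℝ × ℝ | 0 < p.1 ∧ |p.2| ≤ c * p.1})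
    (hSbar : Sbar = {p : ℝ × ℝ | 0 ≤ p.1 ∧ |p.2| ≤ c * p.1})
    (L R : ℝ × ℝ → ℝ × ℝ)
    (hL : ∀ p ∈ Sbar, L p ∈ Sbar) (hR : ∀ p ∈ Sbar, R p ∈ Sbar)
    (utilde : Fin N → ℝ × ℝ) (hutilde : ∀ i, utilde i ∈ S)
    (u : ℕ → Fin N → ℝ × ℝ)
    (hu0 : ∀ i, u 0 i ∈ S)
    (hrec : ∀ (k : ℕ) (i : Fin N),
      (1 + Δτ * (1 + c * Δt / h)) • u (k + 1) i =
        utilde i + Δτ • (L (u k (i - 1)) + R (u k (i + 1)))) :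
    ∀ (k : ℕ) (i : Fin N), u k i ∈ S := by
  have hSsub : S ⊆ Sbar := by
    rw [hS, hSbar]; intro p hp; exact ⟨le_of_lt hp.1, hp.2⟩
  intro k
  induction k with
  | zero => exact hu0
  | succ k ih =>
    intro i
    have ha : (0:ℝ) < 1 + Δτ * (1 + c * Δt / h) := by positivity
    have hLk := hL _ (hSsub (ih (i - 1)))
    have hRk := hR _ (hSsub (ih (i + 1)))
    rw [hSbar] at hLk hRk
    have hut := hutilde i
    rw [hS] at hut
    have heq := hrec k i
    set a := 1 + Δτ * (1 + c * Δt / h) with hadef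
    have hval : u (k + 1) i = a⁻¹ • (utilde i + Δτ • (L (u k (i - 1)) + R (u k (i + 1)))) := by
      rw [← heq, smul_smul, inv_mul_cancel₀ (ne_of_gt ha), one_smul]
    rw [hS]
    constructor
    · show 0 < (u (k+1) i).1
      rw [hval]
      simp only [Prod.smul_fst, Prod.fst_add, smul_eq_mul, Prod.smul_snd]
      have : 0 ≤ Δτ * ((L (u k (i - 1))).1 + (R (u k (i + 1))).1) :=
        mul_nonneg hΔτ.le (add_nonneg hLk.1 hRk.1)
      have h1 : 0 < (utilde i).1 + (Δτ • (L (u k (i - 1)) + R (u k (i + 1)))).1 := by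
        simp only [Prod.smul_fst, Prod.fst_add, smul_eq_mul]
        linarith [hut.1]
      exact mul_pos (inv_pos.mpr ha) h1
    · show |(u (k+1) i).2| ≤ c * (u (k+1) i).1
      rw [hval]
      simp only [Prod.smul_fst, Prod.smul_snd, Prod.fst_add, Prod.snd_add, smul_eq_mul]
      rw [abs_mul, abs_of_pos (inv_pos.mpr ha)]
      have key : |(utilde i).2 + Δτ * ((L (u k (i - 1))).2 + (R (u k (i + 1))).2)| ≤
          c * ((utilde i).1 + Δτ * ((L (u k (i - 1))).1 + (R (u k (i + 1))).1)) := by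
        calc |(utilde i).2 + Δτ * ((L (u k (i - 1))).2 + (R (u k (i + 1))).2)|
            ≤ |(utilde i).2| + Δτ * (|(L (u k (i - 1))).2| + |(R (u k (i + 1))).2|) := by
              calc _ ≤ |(utilde i).2| + |Δτ * ((L (u k (i - 1))).2 + (R (u k (i + 1))).2)| :=
                    abs_add_le _ _
                _ ≤ _ := by
                    rw [abs_mul, abs_of_pos hΔτ]
                    exact add_le_add_right (mul_le_mul_of_nonneg_left (abs_add_le _ _) hΔτ.le) _
          _ ≤ c * (utilde i).1 + Δτ * (c * (L (u k (i - 1))).1 + c * (R (u k (i + 1))).1) := by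
              have := hut.2
              have := hLk.2
              have := hRk.2
              nlinarith
          _ = c * ((utilde i).1 + Δτ * ((L (u k (i - 1))).1 + (R (u k (i + 1))).1)) := by ring
      calc a⁻¹ * |(utilde i).2 + Δτ * ((L (u k (i - 1))).2 + (R (u k (i + 1))).2)|
          ≤ a⁻¹ * (c * ((utilde i).1 + Δτ * ((L (u k (i - 1))).1 + (R (u k (i + 1))).1))) :=
            mul_le_mul_of_nonneg_left key (inv_pos.mpr ha).le
        _ = c * (a⁻¹ * ((utilde i).1 + Δτ * ((L (u k (i - 1))).1 + (R (u k (i + 1))).1))) := by ring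
end
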